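/- Let X = (X₁, …, X_n) be a random variable taking values in the product set S = S₁ × ⋯ × S_n of finite sets, where each coordinate X_j is a random variable taking values in S_j. For every α ≥ 1, the THC entropy is subadditive: H_α(X) ≤ Σ_{j=1}^n H_α(X_j). -/

import Mathlib

open Finset

/-- The α-logarithm: `ln_α(ξ) = (ξ^(1-α) - 1)/(1-α)` for `α ≠ 1`, and `ln ξ` for `α = 1`. -/
noncomputable def alphaLog (α ξ : ℝ) : ℝ :=
  if α = 1 then Real.log ξ else (ξ ^ (1 - α) - 1) / (1 - α)

/-- The Tsallis–Havrda–Charvát entropy of order `α` of a pmf `p` on a finite set. -/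
noncomputable def thc (α : ℝ) {S : Type*} [Fintype S] (p : S → ℝ) : ℝ :=
  if α = 1 then -∑ s, p s * Real.log (p s)
  else ((∑ s, p s ^ α) - 1) / (1 - α)

/-- The binary THC entropy `h_α(q)`. -/
noncomputable def binThc (α q : ℝ) : ℝ :=
  if α = 1 then -(q * Real.log q) - (1 - q) * Real.log (1 - q)
  else (q ^ α + (1 - q) ^ α - 1) / (1 - α)

/-- First conditional THC entropy (Daróczy form): `H_α(X|Y) = Σ_y p(y)^α H_α(X|y)`,
where `p` is the joint pmf of `(X, Y)`.  (Terms with `p(y) = 0` vanish for `α > 0`.) -/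
noncomputable def condThc1 (α : ℝ) {SX SY : Type*} [Fintype SX] [Fintype SY]
    (p : SX × SY → ℝ) : ℝ :=
  ∑ y, (∑ x, p (x, y)) ^ α * thc α (fun x => p (x, y) / ∑ x', p (x', y))

/-- Second conditional THC entropy: `H̃_α(X|Y) = Σ_y p(y) H_α(X|y)`,
where `p` is the joint pmf of `(X, Y)`.  (Terms with `p(y) = 0` vanish.) -/
noncomputable def condThc2 (α : ℝ) {SX SY : Type*} [Fintype SX] [Fintype SY]
    (p : SX × SY → ℝ) : ℝ :=
  ∑ y, (∑ x, p (x, y)) * thc α (fun x => p (x, y) / ∑ x', p (x', y))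

/-- The pmf of a random variable `X` defined on a finite sample space with pmf `μ`. -/
noncomputable def distOf {Ω S : Type*} [Fintype Ω] [DecidableEq S]
    (μ : Ω → ℝ) (X : Ω → S) : S → ℝ :=
  fun s => ∑ ω ∈ Finset.univ.filter (fun ω => X ω = s), μ ω



/-!
Write `φ_α(t) = (t^α - t)/(1 - α)`, resp. `φ_1(t) = -t log t`, so that `H_α(p) = Σ φ_α(p)`. The
scaling rule `φ_α(ct) = t φ_α(c) + c^α φ_α(t)` splits the joint entropy of `(X, Y)` as
`H_α(Y) + Σ_y p(y)^α H_α(X | Y = y)`. For `α ≥ 1` we have `p(y)^α ≤ p(y)`, and concavity of `φ_α`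
(Jensen over `y`) bounds `Σ_y p(y) H_α(X | Y = y)` by `H_α(X)`. Splitting off one coordinate at a
time gives the case of `n` coordinates.
-/

noncomputable def thcSummand (α : ℝ) : ℝ → ℝ :=
  if α = 1 then Real.negMulLog else fun t => (t ^ α - t) / (1 - α)

lemma thcSummand_of_ne_one {α : ℝ} (hα : α ≠ 1) (t : ℝ) :
    thcSummand α t = (t ^ α - t) / (1 - α) := by
  simp [thcSummand, hα]

lemma thcSummand_zero {α : ℝ} (hα : α ≠ 0) : thcSummand α 0 = 0 := by
  by_cases h : α = 1
  · simp [thcSummand, h]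
  · simp [thcSummand_of_ne_one h, Real.zero_rpow hα]

lemma thcSummand_one (α : ℝ) : thcSummand α 1 = 0 := by
  by_cases h : α = 1
  · simp [thcSummand, h]
  · simp [thcSummand_of_ne_one h]

lemma thcSummand_mul (α : ℝ) {c t : ℝ} (hc : 0 ≤ c) (ht : 0 ≤ t) :
    thcSummand α (c * t) = t * thcSummand α c + c ^ α * thcSummand α t := by
  by_cases h : α = 1
  · simpa [thcSummand, h] using Real.negMulLog_mul c t
  · have h1 : (1 : ℝ) - α ≠ 0 := sub_ne_zero.2 (Ne.symm h)
    simp only [thcSummand_of_ne_one h, Real.mul_rpow hc ht]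
    field_simp
    ring

lemma concaveOn_thcSummand {α : ℝ} (hα : 0 < α) : ConcaveOn ℝ (Set.Ici 0) (thcSummand α) := by
  rcases lt_trichotomy α 1 with hlt | rfl | hgt
  · have h : ConcaveOn ℝ (Set.Ici 0) fun t : ℝ => (1 - α)⁻¹ • (t ^ α - t) :=
      ((Real.concaveOn_rpow hα.le hlt.le).sub (convexOn_id (convex_Ici 0))).smul
        (inv_nonneg.2 (sub_nonneg.2 hlt.le))
    convert h using 1
    ext t
    rw [thcSummand_of_ne_one hlt.ne, smul_eq_mul, div_eq_inv_mul]
  · simpa [thcSummand] using Real.concaveOn_negMulLog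
  · have h : ConcaveOn ℝ (Set.Ici 0) fun t : ℝ => (α - 1)⁻¹ • (t - t ^ α) :=
      ((concaveOn_id (convex_Ici 0)).sub (convexOn_rpow hgt.le)).smul
        (inv_nonneg.2 (sub_nonneg.2 hgt.le))
    convert h using 1
    ext t
    rw [thcSummand_of_ne_one hgt.ne', smul_eq_mul, div_eq_inv_mul, ← neg_sub α, inv_neg,
      ← neg_sub t]
    ring

lemma thcSummand_nonneg {α : ℝ} (hα : 0 < α) {t : ℝ} (h0 : 0 ≤ t) (h1 : t ≤ 1) :
    0 ≤ thcSummand α t := by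
  simpa [thcSummand_zero hα.ne', thcSummand_one] using
    (concaveOn_thcSummand hα).min_le_of_mem_Icc Set.self_mem_Ici (Set.mem_Ici.2 zero_le_one) ⟨h0, h1⟩

lemma thc_eq_sum_thcSummand {S : Type*} [Fintype S] (α : ℝ) {p : S → ℝ} (hp : ∑ s, p s = 1) :
    thc α p = ∑ s, thcSummand α (p s) := by
  by_cases h : α = 1
  · simp [thc, thcSummand, h, Real.negMulLog]
  · simp only [thc, thcSummand_of_ne_one h, if_neg h]
    rw [← Finset.sum_div, Finset.sum_sub_distrib, hp]

lemma ConcaveOn.sum_mul_map_div_le {ι : Type*} [Fintype ι] {f : ℝ → ℝ}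
    (hf : ConcaveOn ℝ (Set.Ici 0) f) {c r : ι → ℝ} (hc : ∀ i, 0 ≤ c i) (hc1 : ∑ i, c i = 1)
    (hr : ∀ i, 0 ≤ r i) (hrc : ∀ i, r i ≤ c i) :
    ∑ i, c i * f (r i / c i) ≤ f (∑ i, r i) := by
  have hcancel : ∀ i, c i * (r i / c i) = r i := fun i => by
    rcases (hc i).eq_or_lt with h | h
    · simp [← h, le_antisymm (h ▸ hrc i) (hr i)]
    · exact mul_div_cancel₀ _ h.ne'
  simpa only [smul_eq_mul, hcancel] using
    hf.le_map_sum (t := Finset.univ) (fun i _ => hc i) hc1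
      (fun i _ => Set.mem_Ici.2 (div_nonneg (hr i) (hc i)))

lemma sum_thcSummand_le {ι : Type*} [Fintype ι] {α : ℝ} (hα : 1 ≤ α) {q : ι → ℝ}
    (hq : ∀ i, 0 ≤ q i) (hq1 : ∑ i, q i ≤ 1) :
    ∑ i, thcSummand α (q i) ≤
      thcSummand α (∑ i, q i) + (∑ i, q i) * ∑ i, thcSummand α (q i / ∑ j, q j) := by
  set c := ∑ i, q i
  rcases (Finset.sum_nonneg fun i _ => hq i : 0 ≤ c).eq_or_lt with hc | hc
  · have hq0 : ∀ i, q i = 0 := fun i =>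
      (Finset.sum_eq_zero_iff_of_nonneg fun i _ => hq i).1 hc.symm i (Finset.mem_univ i)
    simp [hq0, show c = 0 from hc.symm, thcSummand_zero (by linarith : α ≠ 0)]
  have hsplit : ∀ i, thcSummand α (q i) =
      q i / c * thcSummand α c + c ^ α * thcSummand α (q i / c) := fun i => by
    rw [← thcSummand_mul α hc.le (div_nonneg (hq i) hc.le), mul_div_cancel₀ _ hc.ne']
  have hpow : c ^ α ≤ c := by
    simpa using Real.rpow_le_rpow_of_exponent_ge hc hq1 hα
  have hnonneg : 0 ≤ ∑ i, thcSummand α (q i / c) :=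
    Finset.sum_nonneg fun i _ => thcSummand_nonneg (by linarith) (div_nonneg (hq i) hc.le)
      ((div_le_one hc).2 (Finset.single_le_sum (fun j _ => hq j) (Finset.mem_univ i)))
  calc ∑ i, thcSummand α (q i)
      = (∑ i, q i / c) * thcSummand α c + c ^ α * ∑ i, thcSummand α (q i / c) := by
        simp only [hsplit, Finset.sum_add_distrib, Finset.sum_mul, Finset.mul_sum]
    _ = thcSummand α c + c ^ α * ∑ i, thcSummand α (q i / c) := by
        rw [← Finset.sum_div, div_self hc.ne', one_mul]
    _ ≤ thcSummand α c + c * ∑ i, thcSummand α (q i / c) := by gcongr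

lemma sum_thcSummand_prod_le {SX SY : Type*} [Fintype SX] [Fintype SY] {α : ℝ} (hα : 1 ≤ α)
    {p : SX × SY → ℝ} (hp : ∀ z, 0 ≤ p z) (hp1 : ∑ z, p z = 1) :
    ∑ z, thcSummand α (p z) ≤
      ∑ x, thcSummand α (∑ y, p (x, y)) + ∑ y, thcSummand α (∑ x, p (x, y)) := by
  set c : SY → ℝ := fun y => ∑ x, p (x, y)
  have hc : ∀ y, 0 ≤ c y := fun y => Finset.sum_nonneg fun x _ => hp (x, y)
  have hc1 : ∑ y, c y = 1 := by rw [← hp1, Fintype.sum_prod_type_right]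
  have hpc : ∀ x y, p (x, y) ≤ c y := fun x y =>
    Finset.single_le_sum (fun x _ => hp (x, y)) (Finset.mem_univ x)
  have hfiber : ∀ y, ∑ x, thcSummand α (p (x, y)) ≤
      thcSummand α (c y) + ∑ x, c y * thcSummand α (p (x, y) / c y) := fun y => by
    rw [← Finset.mul_sum]
    exact sum_thcSummand_le hα (fun x => hp (x, y))
      (hc1 ▸ Finset.single_le_sum (fun y _ => hc y) (Finset.mem_univ y))
  have hjensen : ∀ x, ∑ y, c y * thcSummand α (p (x, y) / c y) ≤
      thcSummand α (∑ y, p (x, y)) := fun x =>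
    (concaveOn_thcSummand (by linarith)).sum_mul_map_div_le hc hc1 (fun y => hp (x, y))
      (hpc x)
  calc ∑ z, thcSummand α (p z)
      = ∑ y, ∑ x, thcSummand α (p (x, y)) := Fintype.sum_prod_type_right _
    _ ≤ ∑ y, (thcSummand α (c y) + ∑ x, c y * thcSummand α (p (x, y) / c y)) :=
        Finset.sum_le_sum fun y _ => hfiber y
    _ = ∑ x, ∑ y, c y * thcSummand α (p (x, y) / c y) + ∑ y, thcSummand α (c y) := by
        rw [Finset.sum_add_distrib, Finset.sum_comm, add_comm]
    _ ≤ ∑ x, thcSummand α (∑ y, p (x, y)) + ∑ y, thcSummand α (c y) := by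
        gcongr with x
        exact hjensen x

lemma thc_prod_le {SX SY : Type*} [Fintype SX] [Fintype SY] {α : ℝ} (hα : 1 ≤ α)
    {p : SX × SY → ℝ} (hp : ∀ z, 0 ≤ p z) (hp1 : ∑ z, p z = 1) :
    thc α p ≤ thc α (fun x => ∑ y, p (x, y)) + thc α (fun y => ∑ x, p (x, y)) := by
  rw [thc_eq_sum_thcSummand α hp1,
    thc_eq_sum_thcSummand α (by rwa [← Fintype.sum_prod_type]),
    thc_eq_sum_thcSummand α (by rwa [← Fintype.sum_prod_type_right])]
  exact sum_thcSummand_prod_le hα hp hp1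

lemma thc_eq_zero_of_unique {S : Type*} [Fintype S] [Unique S] (α : ℝ) {p : S → ℝ}
    (hp : ∑ s, p s = 1) : thc α p = 0 := by
  rw [thc_eq_sum_thcSummand α hp, Fintype.sum_unique, ← Fintype.sum_unique p, hp,
    thcSummand_one]

lemma thc_comp_equiv {S T : Type*} [Fintype S] [Fintype T] (α : ℝ) (p : S → ℝ) (e : T ≃ S) :
    thc α (fun t => p (e t)) = thc α p := by
  simp only [thc, e.sum_comp fun s => p s * Real.log (p s), e.sum_comp fun s => p s ^ α]

section distOf

variable {Ω S T : Type*} [Fintype Ω] (μ : Ω → ℝ)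

lemma distOf_nonneg [DecidableEq S] (hμ : ∀ ω, 0 ≤ μ ω) (X : Ω → S) (s : S) :
    0 ≤ distOf μ X s :=
  Finset.sum_nonneg fun ω _ => hμ ω

lemma sum_distOf [Fintype S] [DecidableEq S] (X : Ω → S) : ∑ s, distOf μ X s = ∑ ω, μ ω :=
  Finset.sum_fiberwise Finset.univ X μ

lemma distOf_equiv_comp [DecidableEq S] [DecidableEq T] (X : Ω → S) (e : S ≃ T) (t : T) :
    distOf μ (fun ω => e (X ω)) t = distOf μ X (e.symm t) := by
  simp only [distOf, ← e.eq_symm_apply]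

lemma sum_distOf_prod_right [Fintype T] [DecidableEq S] [DecidableEq T] (Y : Ω → S)
    (Z : Ω → T) (y : S) : ∑ z, distOf μ (fun ω => (Y ω, Z ω)) (y, z) = distOf μ Y y := by
  rw [distOf, ← Finset.sum_fiberwise (Finset.univ.filter fun ω => Y ω = y) Z μ]
  simp only [distOf, Finset.filter_filter, Prod.mk.injEq]

lemma sum_distOf_prod_left [Fintype S] [DecidableEq S] [DecidableEq T] (Y : Ω → S)
    (Z : Ω → T) (z : T) : ∑ y, distOf μ (fun ω => (Y ω, Z ω)) (y, z) = distOf μ Z z := by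
  rw [distOf, ← Finset.sum_fiberwise (Finset.univ.filter fun ω => Z ω = z) Y μ]
  simp only [distOf, Finset.filter_filter, Prod.mk.injEq, and_comm]

lemma thc_distOf_prod_le [Fintype S] [Fintype T] [DecidableEq S] [DecidableEq T]
    (hμ : ∀ ω, 0 ≤ μ ω) (hμ1 : ∑ ω, μ ω = 1) {α : ℝ} (hα : 1 ≤ α) (Y : Ω → S) (Z : Ω → T) :
    thc α (distOf μ fun ω => (Y ω, Z ω)) ≤ thc α (distOf μ Y) + thc α (distOf μ Z) := by
  simpa only [sum_distOf_prod_right, sum_distOf_prod_left] using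
    thc_prod_le hα (distOf_nonneg μ hμ fun ω => (Y ω, Z ω)) ((sum_distOf μ _).trans hμ1)

end distOf

/-- Let `X = (X₁, …, Xₙ)` be a random variable with values in a finite
product set. For every `α ≥ 1`, the THC entropy is subadditive:
`H_α(X) ≤ Σ_j H_α(X_j)`. -/
theorem thc_subadditive {Ω : Type*} [Fintype Ω] (n : ℕ) (S : Fin n → Type*)
    [∀ i, Fintype (S i)] [∀ i, DecidableEq (S i)]
    (μ : Ω → ℝ) (hμ : ∀ ω, 0 ≤ μ ω) (hμ1 : ∑ ω, μ ω = 1)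
    (X : ∀ i : Fin n, Ω → S i)
    (α : ℝ) (hα : 1 ≤ α) :
    thc α (distOf μ (fun ω => fun i : Fin n => X i ω)) ≤
      ∑ j, thc α (distOf μ (X j)) := by
  induction n with
  | zero =>
    simp [thc_eq_zero_of_unique α ((sum_distOf μ _).trans hμ1)]
  | succ n ih =>
    have hcons : (fun ω i => X i ω) = fun ω => Fin.consEquiv S (X 0 ω, fun i => X i.succ ω) :=
      funext fun ω => (Fin.cons_self_tail fun i => X i ω).symm
    have hjoint : thc α (distOf μ fun ω i => X i ω) =
        thc α (distOf μ fun ω => (X 0 ω, fun i : Fin n => X i.succ ω)) := by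
      rw [hcons, funext (distOf_equiv_comp μ _ (Fin.consEquiv S)), thc_comp_equiv]
    have hpair := thc_distOf_prod_le μ hμ hμ1 hα (X 0) fun ω (i : Fin n) => X i.succ ω
    have htail := ih (fun i => S i.succ) fun i => X i.succ
    rw [Fin.sum_univ_succ, hjoint]
    linarith
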